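/- arXiv:1303.4482 — 6 statements merged into one kernel-verified Lean document; each statement's English description precedes it below -/
import Mathlib

section
/- For integers m, n with gcd(mn, q) = 1, the sum over all primitive Dirichlet characters χ mod q of χ(m)·conj(χ)(n) equals the sum over factorizations q = d·r with r dividing (m − n) of μ(d)·φ(r). -/
/-!
Every Dirichlet character mod `k` is induced by a unique primitive character, whose modulus is its
conductor `d ∣ k`, and at arguments coprime to `k` the two characters agree. Hence, writing `P(d)`
for the sum of `χ(m) conj(χ(n))` over the primitive characters mod `d`, the orthogonality relation
for all characters mod `k` reads `∑_{d ∣ k} P(d) = [k ∣ m - n] φ(k)`, and Möbius inversion gives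
`P(q)`.
-/

open Finset ArithmeticFunction
open scoped Classical

namespace DirichletCharacter

theorem sum_apply_mul_conj_apply {k : ℕ} [NeZero k] {b : ZMod k} (hb : IsUnit b) (a : ZMod k) :
    ∑ χ : DirichletCharacter ℂ k, χ a * starRingEnd ℂ (χ b) =
      if b = a then (k.totient : ℂ) else 0 := by
  have conj_eq (χ : DirichletCharacter ℂ k) : starRingEnd ℂ (χ b) = χ b⁻¹ := by
    rw [starRingEnd_apply, MulChar.star_apply', MulChar.inv_apply_eq_inv']
    exact (eq_inv_of_mul_eq_one_left (by rw [← map_mul, ZMod.inv_mul_of_unit _ hb, map_one])).symm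
  rw [← sum_char_inv_mul_char_eq ℂ hb a]
  exact sum_congr rfl fun χ _ ↦ by rw [conj_eq, mul_comm]

variable {R : Type*} [CommRing R]

theorem changeLevel_apply_natCast {d k : ℕ} (hd : d ∣ k) (χ : DirichletCharacter R d) {a : ℕ}
    (ha : a.Coprime k) : changeLevel hd χ a = χ a := by
  simpa using changeLevel_eq_cast_of_dvd' χ hd (Nat.isCoprime_iff_coprime.mpr ha)

theorem sum_filter_conductor_eq [IsDomain R] {M : Type*} [AddCommMonoid M] {d k : ℕ} [NeZero k]
    (hd : d ∣ k) (F : DirichletCharacter R k → M) :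
    ∑ χ with χ.conductor = d, F χ =
      ∑ χ₀ : DirichletCharacter R d with χ₀.IsPrimitive, F (changeLevel hd χ₀) := by
  refine (sum_bij (fun χ₀ _ ↦ changeLevel hd χ₀) ?_ (fun _ _ _ _ ↦ (changeLevel_injective hd ·))
    ?_ fun _ _ ↦ rfl).symm
  · intro χ₀ hχ₀
    simp only [mem_filter_univ] at hχ₀ ⊢
    rwa [conductor_changeLevel]
  · intro χ hχ
    simp only [mem_filter_univ] at hχ
    obtain ⟨_, χ₀, hχ₀⟩ : FactorsThrough χ d := hχ ▸ factorsThrough_conductor χ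
    refine ⟨χ₀, ?_, hχ₀.symm⟩
    rwa [mem_filter_univ, IsPrimitive, ← conductor_changeLevel χ₀ hd, ← hχ₀]

end DirichletCharacter

open DirichletCharacter

noncomputable def primitiveCharSum (m n k : ℕ) : ℂ :=
  ∑ χ : DirichletCharacter ℂ k,
    if χ.IsPrimitive then χ (m : ZMod k) * starRingEnd ℂ (χ (n : ZMod k)) else 0

theorem sum_divisors_primitiveCharSum {m n k : ℕ} [NeZero k] (hm : m.Coprime k)
    (hn : n.Coprime k) :
    ∑ d ∈ k.divisors, primitiveCharSum m n d =
      if (k : ℤ) ∣ (m : ℤ) - (n : ℤ) then (k.totient : ℂ) else 0 := by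
  calc ∑ d ∈ k.divisors, primitiveCharSum m n d
      = ∑ χ : DirichletCharacter ℂ k, χ (m : ZMod k) * starRingEnd ℂ (χ (n : ZMod k)) := by
        rw [← sum_fiberwise_of_maps_to (g := conductor)
          fun χ _ ↦ Nat.mem_divisors.mpr ⟨conductor_dvd_level χ, NeZero.ne k⟩]
        refine sum_congr rfl fun d hd ↦ ?_
        rw [sum_filter_conductor_eq (Nat.dvd_of_mem_divisors hd), primitiveCharSum, ← sum_filter]
        refine sum_congr rfl fun χ₀ _ ↦ ?_
        rw [changeLevel_apply_natCast _ _ hm, changeLevel_apply_natCast _ _ hn]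
    _ = if (k : ℤ) ∣ (m : ℤ) - (n : ℤ) then (k.totient : ℂ) else 0 := by
        rw [sum_apply_mul_conj_apply ((ZMod.isUnit_iff_coprime n k).mpr hn)]
        simp_rw [← Int.cast_natCast (R := ZMod k), ZMod.intCast_eq_intCast_iff_dvd_sub]

/-- For integers `m, n` coprime to `q`, the sum over all primitive Dirichlet characters
`χ` mod `q` of `χ(m) * conj(χ(n))` equals `∑_{q = d·r, r ∣ m - n} μ(d) φ(r)`. -/
theorem sum_primitive_char_orthogonality (q : ℕ) [NeZero q] (m n : ℕ)
    (h : Nat.Coprime (m * n) q) :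
    ∑ᶠ χ : DirichletCharacter ℂ q,
        (if χ.IsPrimitive then χ (m : ZMod q) * (starRingEnd ℂ) (χ (n : ZMod q)) else 0)
      = ∑ r ∈ q.divisors,
          (if (r : ℤ) ∣ (m : ℤ) - (n : ℤ)
            then (moebius (q / r) : ℂ) * (Nat.totient r : ℂ) else 0) := by
  have hm : m.Coprime q := Nat.Coprime.coprime_mul_right h
  have hn : n.Coprime q := Nat.Coprime.coprime_mul_left h
  have inversion := (sum_eq_iff_sum_mul_moebius_eq_on (R := ℂ)
    (g := fun k ↦ if (k : ℤ) ∣ (m : ℤ) - (n : ℤ) then (k.totient : ℂ) else 0)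
    {k | k ∣ q} fun _ _ ↦ dvd_trans).mp
    (fun k hk hkq ↦ have := NeZero.of_pos hk
      sum_divisors_primitiveCharSum (hm.coprime_dvd_right hkq) (hn.coprime_dvd_right hkq))
    q (NeZero.pos q) dvd_rfl
  rw [finsum_eq_sum_of_fintype, ← primitiveCharSum, ← inversion,
    Nat.sum_divisorsAntidiagonal' (f := fun d r ↦ (moebius d : ℂ) *
      if (r : ℤ) ∣ (m : ℤ) - (n : ℤ) then (r.totient : ℂ) else 0)]
  simp only [mul_ite, mul_zero]
end

section
/- For integers m, n with gcd(mn, q) = 1, the sum over all primitive even Dirichlet characters χ mod q (i.e., primitive characters with χ(−1) = 1) of χ(m)·conj(χ)(n) equals one half of the sum over factorizations q = d·r with r dividing m − n or r dividing m + n (counted with multiplicity if both hold) of μ(d)·φ(r). -/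
/-!
Writing the indicator of evenness as `(χ m + χ (-m)) / 2` reduces the claim to the sums
`∑ χ χ(a) χ⁻¹(n)` over primitive `χ` mod `q`, for `a = ±m`. Every character mod `d` is induced
by exactly one primitive character, whose level `e` divides `d`; so summing these primitive sums
over `e ∣ d` gives the full orthogonality sum `φ(d) [d ∣ a - n]`, and Möbius inversion over the
divisors of `q` recovers the primitive sum.
-/

open Finset ArithmeticFunction
open scoped Classical

namespace DirichletCharacter

lemma isPrimitive_iff_conductor_changeLevel {R : Type*} [CommMonoidWithZero R] {e d : ℕ}
    [NeZero d] (h : e ∣ d) (ψ : DirichletCharacter R e) :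
    ψ.IsPrimitive ↔ (changeLevel h ψ).conductor = e := by
  rw [conductor_changeLevel, isPrimitive_def]

theorem sum_eq_sum_divisors_sum_isPrimitive {R M : Type*} [CommRing R] [IsDomain R]
    [AddCommMonoid M] (d : ℕ) [NeZero d] (F : ∀ e : ℕ, DirichletCharacter R e → M)
    (hF : ∀ (e : ℕ) (he : e ∣ d) (ψ : DirichletCharacter R e), F d (changeLevel he ψ) = F e ψ) :
    ∑ χ : DirichletCharacter R d, F d χ =
      ∑ e ∈ d.divisors, ∑ ψ : DirichletCharacter R e with ψ.IsPrimitive, F e ψ := by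
  rw [← sum_fiberwise_of_maps_to (g := conductor)
    fun χ _ ↦ Nat.mem_divisors.mpr ⟨χ.conductor_dvd_level, NeZero.ne d⟩]
  refine sum_congr rfl fun e he ↦ (sum_bij (fun ψ _ ↦ changeLevel (Nat.dvd_of_mem_divisors he) ψ)
    ?_ (fun _ _ _ _ h ↦ changeLevel_injective _ h) ?_ fun ψ _ ↦ (hF e _ ψ).symm).symm
  · intro ψ hψ
    simpa [← isPrimitive_iff_conductor_changeLevel] using hψ
  · intro χ hχ
    rw [mem_filter] at hχ
    obtain ⟨hed, ψ, rfl⟩ : χ.FactorsThrough e := hχ.2 ▸ χ.factorsThrough_conductor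
    exact ⟨ψ, by simpa [isPrimitive_iff_conductor_changeLevel hed] using hχ.2, rfl⟩

lemma inv_apply_intCast {R : Type*} [CommGroupWithZero R] {d : ℕ} (χ : DirichletCharacter R d)
    {b : ℤ} (hb : IsCoprime b d) : χ⁻¹ b = χ (b : ZMod d)⁻¹ := by
  have hbu : IsUnit (b : ZMod d) := ZMod.coe_unitOfIsCoprime b hb ▸ Units.isUnit _
  rw [MulChar.inv_apply_eq_inv']
  refine (eq_inv_of_mul_eq_one_left ?_).symm
  rw [← map_mul, ZMod.inv_mul_of_unit _ hbu, map_one]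

theorem sum_apply_mul_inv_apply_intCast (d : ℕ) [NeZero d] (a : ℤ) {b : ℤ}
    (hb : IsCoprime b d) :
    ∑ χ : DirichletCharacter ℂ d, χ a * χ⁻¹ b = if (d : ℤ) ∣ a - b then (d.totient : ℂ) else 0 := by
  have hbu : IsUnit (b : ZMod d) := ZMod.coe_unitOfIsCoprime b hb ▸ Units.isUnit _
  calc ∑ χ : DirichletCharacter ℂ d, χ a * χ⁻¹ b
      = ∑ χ : DirichletCharacter ℂ d, χ (b : ZMod d)⁻¹ * χ a :=
        sum_congr rfl fun χ _ ↦ by rw [inv_apply_intCast χ hb, mul_comm]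
    _ = _ := by simp only [sum_char_inv_mul_char_eq ℂ hbu, ZMod.intCast_eq_intCast_iff_dvd_sub]

theorem sum_isPrimitive_apply_mul_inv_apply_intCast (q : ℕ) [NeZero q] {a b : ℤ}
    (ha : IsCoprime a q) (hb : IsCoprime b q) :
    ∑ χ : DirichletCharacter ℂ q with χ.IsPrimitive, χ a * χ⁻¹ b =
      ∑ r ∈ q.divisors, (if (r : ℤ) ∣ a - b then 1 else 0) * (moebius (q / r) : ℂ) * r.totient := by
  let f (e : ℕ) : ℂ := ∑ χ : DirichletCharacter ℂ e with χ.IsPrimitive, χ a * χ⁻¹ b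
  let g (d : ℕ) : ℂ := if (d : ℤ) ∣ a - b then (d.totient : ℂ) else 0
  have hdiv : ∀ d > 0, d ∈ {d | d ∣ q} → ∑ e ∈ d.divisors, f e = g d := by
    intro d hd₀ hdq
    have : NeZero d := ⟨hd₀.ne'⟩
    have hcop {c : ℤ} (hc : IsCoprime c q) : IsCoprime c d :=
      hc.of_isCoprime_of_dvd_right (Int.natCast_dvd_natCast.mpr hdq)
    dsimp only [f, g]
    rw [← sum_apply_mul_inv_apply_intCast d a (hcop hb),
      sum_eq_sum_divisors_sum_isPrimitive d (fun e χ ↦ χ a * χ⁻¹ b)]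
    intro e he ψ
    rw [← map_inv, changeLevel_eq_cast_of_dvd' _ he (hcop ha),
      changeLevel_eq_cast_of_dvd' _ he (hcop hb)]
  have hinv := (sum_eq_iff_sum_mul_moebius_eq_on {d | d ∣ q} fun _ _ ↦ dvd_trans).mp hdiv q
    (Nat.pos_of_neZero q) dvd_rfl
  dsimp only [f] at hinv
  rw [← hinv, Nat.sum_divisorsAntidiagonal' fun x y ↦ (moebius x : ℂ) * g y]
  refine sum_congr rfl fun r _ ↦ ?_
  dsimp only [g]
  split_ifs <;> ring

lemma ite_even_apply_eq {R : Type*} [Field R] [NeZero (2 : R)] {n : ℕ}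
    (χ : DirichletCharacter R n) (x : ZMod n) :
    (if χ.Even then χ x else 0) = (χ x + χ (-x)) / 2 := by
  rcases χ.even_or_odd with hχ | hχ
  · rw [if_pos hχ, hχ.eval_neg, add_self_div_two]
  · rw [if_neg hχ.not_even, hχ.eval_neg, add_neg_cancel, zero_div]

end DirichletCharacter

open DirichletCharacter

/-- For integers `m, n` coprime to `q`, the sum over all primitive *even* Dirichlet characters
`χ` mod `q` of `χ(m) * conj(χ(n))` equals one half of the sum over factorizations `q = d·r`
with `r ∣ m - n` or `r ∣ m + n` (counted with multiplicity) of `μ(d) φ(r)`. -/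
theorem sum_primitive_even_char_orthogonality (q : ℕ) [NeZero q] (m n : ℕ)
    (h : Nat.Coprime (m * n) q) :
    ∑ᶠ χ : DirichletCharacter ℂ q,
        (if χ.IsPrimitive ∧ χ.Even
          then χ (m : ZMod q) * (starRingEnd ℂ) (χ (n : ZMod q)) else 0)
      = (1 / 2) * ∑ r ∈ q.divisors,
          (((if (r : ℤ) ∣ (m : ℤ) - (n : ℤ) then 1 else 0)
              + (if (r : ℤ) ∣ (m : ℤ) + (n : ℤ) then 1 else 0))
            * (moebius (q / r) : ℂ) * (Nat.totient r : ℂ)) := by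
  have hm : IsCoprime (m : ℤ) q := Nat.isCoprime_iff_coprime.mpr h.coprime_mul_right
  have hn : IsCoprime (n : ℤ) q := Nat.isCoprime_iff_coprime.mpr h.coprime_mul_left
  have hsummand (χ : DirichletCharacter ℂ q) :
      (if χ.IsPrimitive ∧ χ.Even then χ (m : ZMod q) * (starRingEnd ℂ) (χ (n : ZMod q)) else 0) =
        1 / 2 * ((if χ.IsPrimitive then χ (m : ℤ) * χ⁻¹ (n : ℤ) else 0) +
          (if χ.IsPrimitive then χ (-(m : ℤ) : ℤ) * χ⁻¹ (n : ℤ) else 0)) := by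
    rw [← RCLike.star_def, MulChar.star_apply', ite_and, ← ite_zero_mul, ite_even_apply_eq]
    split_ifs <;> push_cast <;> ring
  rw [finsum_eq_sum_of_fintype, sum_congr rfl fun χ _ ↦ hsummand χ, ← mul_sum, sum_add_distrib,
    ← sum_filter, ← sum_filter, sum_isPrimitive_apply_mul_inv_apply_intCast q hm hn,
    sum_isPrimitive_apply_mul_inv_apply_intCast q hm.neg_left hn, ← sum_add_distrib]
  refine congrArg _ (sum_congr rfl fun r _ ↦ ?_)
  simp only [← neg_add', dvd_neg, add_mul]
end

section
/- Let τ₄(n) denote the number of ways to write n as an ordered product of 4 positive integers. For a prime p and complex s with Re(s) > 1/2, the sum over r ≥ 0 of τ₄(p^r)²/p^{2rs} equals (1 − p^{−2s})^{−7}·(1 + 9·p^{−2s} + 9·p^{−4s} + p^{−6s}). -/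
/-!
The prime powers `p ^ r` have `τ₄(p ^ r) = C(r + 3, 3)` ordered factorisations into four factors,
one for each way of writing `r` as a sum of four exponents. With `x = p ^ (-2s)`, `‖x‖ < 1`, the
series is `∑ C(r + 3, 3)² xʳ`, and the polynomial identity
`C(r + 3, 3)² = C(r + 6, 6) + 9 C(r + 5, 6) + 9 C(r + 4, 6) + C(r + 3, 6)` splits it into four
shifted negative-binomial series `∑ C(r + 6 - j, 6) xʳ = xʲ / (1 - x)⁷`.
-/

open Finset

/-- `τ₄ n` is the number of ways to write `n` as an ordered product of 4 positive integers. -/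
def tau4 (n : ℕ) : ℕ :=
  (((Finset.Icc 1 n ×ˢ Finset.Icc 1 n) ×ˢ (Finset.Icc 1 n ×ˢ Finset.Icc 1 n)).filter
    (fun t => t.1.1 * t.1.2 * t.2.1 * t.2.2 = n)).card

theorem Finset.Nat.card_antidiagonalTuple_succ (k n : ℕ) :
    #(Nat.antidiagonalTuple (k + 1) n) = (n + k).choose k := by
  rw [card_eq_of_equiv_fintype ((Equiv.subtypeEquivRight fun _ ↦ Nat.mem_antidiagonalTuple).trans
      (Sym.equivNatSumOfFintype _ n).symm), Sym.card_sym_eq_choose, Fintype.card_fin,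
    show k + 1 + n - 1 = n + k by omega, Nat.choose_symm_add]

lemma tau4_prime_pow_eq_card_antidiagonalTuple {p : ℕ} (hp : p.Prime) (r : ℕ) :
    tau4 (p ^ r) = #(Nat.antidiagonalTuple 4 r) := by
  have pow_inj := Nat.pow_right_injective hp.two_le
  refine (card_nbij (fun e ↦ ((p ^ e 0, p ^ e 1), (p ^ e 2, p ^ e 3))) ?_ ?_ ?_).symm
  · intro e he
    have hsum : e 0 + e 1 + e 2 + e 3 = r := by
      simpa [Fin.sum_univ_four] using Nat.mem_antidiagonalTuple.mp he
    have hmem (i : Fin 4) : p ^ e i ∈ Icc 1 (p ^ r) :=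
      mem_Icc.mpr ⟨Nat.one_le_pow _ _ hp.pos,
        Nat.pow_le_pow_right hp.pos (by fin_cases i <;> simp <;> omega)⟩
    simp only [coe_filter, Set.mem_ofPred_eq, mem_product]
    exact ⟨⟨⟨hmem 0, hmem 1⟩, hmem 2, hmem 3⟩, by simp only [← pow_add, hsum]⟩
  · intro e _ e' _ h
    simp only [Prod.mk.injEq] at h
    obtain ⟨⟨h0, h1⟩, h2, h3⟩ := h
    ext i
    fin_cases i
    exacts [pow_inj h0, pow_inj h1, pow_inj h2, pow_inj h3]
  · rintro ⟨⟨a, b⟩, c, d⟩ ht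
    simp only [coe_filter, Set.mem_ofPred_eq] at ht
    obtain ⟨-, hprod⟩ := ht
    have ha : a ∣ p ^ r := ⟨b * c * d, by rw [← hprod]; ring⟩
    have hb : b ∣ p ^ r := ⟨a * c * d, by rw [← hprod]; ring⟩
    have hc : c ∣ p ^ r := ⟨a * b * d, by rw [← hprod]; ring⟩
    have hd : d ∣ p ^ r := ⟨a * b * c, by rw [← hprod]; ring⟩
    obtain ⟨i, -, rfl⟩ := (Nat.dvd_prime_pow hp).mp ha
    obtain ⟨j, -, rfl⟩ := (Nat.dvd_prime_pow hp).mp hb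
    obtain ⟨k, -, rfl⟩ := (Nat.dvd_prime_pow hp).mp hc
    obtain ⟨l, -, rfl⟩ := (Nat.dvd_prime_pow hp).mp hd
    refine ⟨![i, j, k, l], ?_, rfl⟩
    simp only [← pow_add] at hprod
    simpa [Nat.mem_antidiagonalTuple, Fin.sum_univ_four] using pow_inj hprod

lemma tau4_prime_pow {p : ℕ} (hp : p.Prime) (r : ℕ) : tau4 (p ^ r) = (r + 3).choose 3 := by
  rw [tau4_prime_pow_eq_card_antidiagonalTuple hp, Nat.card_antidiagonalTuple_succ]

lemma choose_add_three_sq (r : ℕ) :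
    (r + 3).choose 3 ^ 2
      = (r + 6).choose 6 + 9 * (r + 5).choose 6 + 9 * (r + 4).choose 6 + (r + 3).choose 6 := by
  apply Nat.cast_injective (R := ℚ)
  push_cast [Nat.cast_choose_eq_descPochhammer_div]
  simp only [descPochhammer_succ_right, descPochhammer_zero, Polynomial.eval_mul,
    Polynomial.eval_sub, Polynomial.eval_X, Polynomial.eval_natCast, Polynomial.eval_one,
    Nat.factorial]
  push_cast
  ring

section Geometric

variable {𝕜 : Type*} [NormedDivisionRing 𝕜] {x : 𝕜}

lemma hasSum_choose_add_mul_geometric (hx : ‖x‖ < 1) (k j : ℕ) :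
    HasSum (fun n ↦ ((n + k).choose (k + j) : 𝕜) * x ^ n) (((1 - x) ^ (k + j + 1))⁻¹ * x ^ j) := by
  have hshift : HasSum (fun n ↦ ((n + j + k).choose (k + j) : 𝕜) * x ^ (n + j))
      (((1 - x) ^ (k + j + 1))⁻¹ * x ^ j) := by
    simpa [pow_add, mul_assoc, add_assoc, add_comm j k] using
      (hasSum_choose_mul_geometric_of_norm_lt_one (k + j) hx).mul_right (x ^ j)
  refine (hasSum_nat_add_iff' j).mp ?_
  rwa [sum_eq_zero fun i hi ↦ by rw [Nat.choose_eq_zero_of_lt (by rw [mem_range] at hi; omega),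
    Nat.cast_zero, zero_mul], sub_zero]

lemma hasSum_choose_add_three_sq_mul_geometric (hx : ‖x‖ < 1) :
    HasSum (fun r ↦ ((r + 3).choose 3 : 𝕜) ^ 2 * x ^ r)
      (((1 - x) ^ 7)⁻¹ * (1 + 9 * x + 9 * x ^ 2 + x ^ 3)) := by
  convert (((hasSum_choose_add_mul_geometric hx 6 0).add
    ((hasSum_choose_add_mul_geometric hx 5 1).mul_left 9)).add
    ((hasSum_choose_add_mul_geometric hx 4 2).mul_left 9)).add
    (hasSum_choose_add_mul_geometric hx 3 3) using 1
  · ext r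
    rw [← Nat.cast_pow, choose_add_three_sq]
    push_cast
    noncomm_ring
  · noncomm_ring

end Geometric

/-- For a prime `p` and `Re(s) > 1/2`,
`∑_{r ≥ 0} τ₄(p^r)² / p^{2rs} = (1 - p^{-2s})^{-7} (1 + 9 p^{-2s} + 9 p^{-4s} + p^{-6s})`. -/
theorem tsum_tau4_sq_prime_pow (p : ℕ) (hp : p.Prime) (s : ℂ) (hs : 1 / 2 < s.re) :
    ∑' r : ℕ, (tau4 (p ^ r) : ℂ) ^ 2 / (p : ℂ) ^ (2 * (r : ℂ) * s)
      = ((1 - (p : ℂ) ^ (-2 * s)) ^ 7)⁻¹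
          * (1 + 9 * (p : ℂ) ^ (-2 * s) + 9 * (p : ℂ) ^ (-4 * s) + (p : ℂ) ^ (-6 * s)) := by
  set x : ℂ := (p : ℂ) ^ (-2 * s)
  have hx : ‖x‖ < 1 := by
    rw [Complex.norm_natCast_cpow_of_pos hp.pos]
    refine Real.rpow_lt_one_of_one_lt_of_neg (mod_cast hp.one_lt) ?_
    rw [show (-2 * s).re = -2 * s.re by simp]
    linarith
  have hx_pow (k : ℕ) (t : ℂ) (ht : t = k * (-2 * s)) : (p : ℂ) ^ t = x ^ k := by
    rw [ht, Complex.cpow_nat_mul]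
  have hterm (r : ℕ) : (tau4 (p ^ r) : ℂ) ^ 2 / (p : ℂ) ^ (2 * (r : ℂ) * s)
      = ((r + 3).choose 3 : ℂ) ^ 2 * x ^ r := by
    rw [tau4_prime_pow hp, div_eq_mul_inv, ← Complex.cpow_neg, hx_pow r _ (by ring)]
  rw [tsum_congr hterm, (hasSum_choose_add_three_sq_mul_geometric hx).tsum_eq,
    hx_pow 2 _ (by ring), hx_pow 3 _ (by ring)]
end

section
/- Let q ≥ 1, y > 0, k ≥ 1 a natural number with y^k ≤ φ(q)/log q, and let a : primes → ℂ. Then the sum over all Dirichlet characters χ mod q of |∑_{p ≤ y, p prime} a(p)χ(p)/√p|^{2k} is at most an absolute constant times φ(q)·k!·(∑_{p ≤ y} |a(p)|²/p)^k. -/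
/-!
Expanding the `k`-th power gives `(∑_{p ≤ y} a(p)χ(p)/√p)^k = ∑_n b(n)χ(n)`, where `n` runs
over products of `k` primes `≤ y`, so `n ≤ y^k < q` because `φ(q) < q log q`. Distinct such `n`
are distinct residues mod `q`, so orthogonality of characters bounds the mean square over `χ` by
`φ(q) ∑_n |b(n)|²`. Each `n` has at most `k!` ordered factorisations into primes, so
Cauchy–Schwarz gives `∑_n |b(n)|² ≤ k! (∑_p |a(p)|²/p)^k`; hence the bound holds with `C = 1`.
-/
open Finset ComplexConjugate
open scoped Nat

theorem Nat.totient_div_log_lt_self {q : ℕ} (hq : q ≠ 0) : (φ q : ℝ) / Real.log q < q := by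
  -- For `q = 1` the left side is `1 / log 1 = 1 / 0 = 0`.
  obtain rfl | hq1 := eq_or_ne q 1
  · simp
  have hq2 : (1 : ℝ) < q := by exact_mod_cast Nat.one_lt_iff_ne_zero_and_ne_one.2 ⟨hq, hq1⟩
  have hlog : Real.log (q : ℝ)⁻¹ < (q : ℝ)⁻¹ - 1 :=
    Real.log_lt_sub_one_of_pos (by positivity) (inv_ne_one.2 hq2.ne')
  have hφ : (φ q : ℝ) + 1 ≤ q := by exact_mod_cast Nat.totient_lt q (by omega)
  rw [Real.log_inv] at hlog
  rw [div_lt_iff₀ (Real.log_pos hq2)]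
  have : (q : ℝ) * (q : ℝ)⁻¹ = 1 := mul_inv_cancel₀ (by positivity)
  nlinarith

theorem card_filter_prod_eq_le_factorial {k : ℕ} (T : Finset (Fin k → ℕ))
    (hT : ∀ f ∈ T, ∀ i, (f i).Prime) (n : ℕ) : #{f ∈ T | ∏ i, f i = n} ≤ k ! := by
  have hperm : ∀ f ∈ T, ∏ i, f i = n → (List.ofFn f).Perm n.primeFactorsList :=
    fun f hf hn =>
    Nat.primeFactorsList_unique (by rw [List.prod_ofFn, hn])
      (by simpa [List.forall_mem_ofFn_iff] using hT f hf)
  obtain hempty | ⟨f₀, hf₀⟩ := (T.filter fun f => ∏ i, f i = n).eq_empty_or_nonempty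
  · simp [hempty]
  rw [mem_filter] at hf₀
  have hlen : n.primeFactorsList.length = k := by
    simpa using (hperm f₀ hf₀.1 hf₀.2).length_eq.symm
  calc #{f ∈ T | ∏ i, f i = n} ≤ #n.primeFactorsList.permutations.toFinset := by
        refine card_le_card_of_injOn List.ofFn (fun f hf => ?_) List.ofFn_injective.injOn
        rw [mem_coe, mem_filter] at hf
        simpa [List.mem_permutations] using hperm f hf.1 hf.2
    _ ≤ n.primeFactorsList.permutations.length := List.toFinset_card_le _
    _ = k ! := by rw [List.length_permutations, hlen]

theorem card_filter_natCast_prod_eq_le_factorial {q k N : ℕ} (T : Finset (Fin k → ℕ))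
    (hT : ∀ f ∈ T, ∀ i, (f i).Prime ∧ f i ≤ N) (hNq : N ^ k < q) {f₀ : Fin k → ℕ} (hf₀ : f₀ ∈ T) :
    #{f ∈ T | ((∏ i, f i : ℕ) : ZMod q) = ((∏ i, f₀ i : ℕ) : ZMod q)} ≤ k ! := by
  have hlt : ∀ f ∈ T, ∏ i, f i < q := fun f hf =>
    (prod_le_pow_card _ _ _ fun i _ => (hT f hf i).2).trans_lt (by simpa using hNq)
  refine (card_le_card fun f hf => ?_).trans
    (card_filter_prod_eq_le_factorial T (fun f hf i => (hT f hf i).1) (∏ i, f₀ i))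
  rw [mem_filter] at hf ⊢
  obtain ⟨hfT, hres⟩ := hf
  rw [ZMod.natCast_eq_natCast_iff', Nat.mod_eq_of_lt (hlt f hfT), Nat.mod_eq_of_lt (hlt f₀ hf₀)]
    at hres
  exact ⟨hfT, hres⟩

theorem sum_norm_sq_sum_fiberwise_le {ι κ E : Type*} [DecidableEq κ]
    [SeminormedAddCommGroup E] (s : Finset ι) (g : ι → κ) (w : ι → E) {m : ℕ}
    (hm : ∀ y ∈ s.image g, #{i ∈ s | g i = y} ≤ m) :
    ∑ y ∈ s.image g, ‖∑ i ∈ s with g i = y, w i‖ ^ 2 ≤ m * ∑ i ∈ s, ‖w i‖ ^ 2 := by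
  calc ∑ y ∈ s.image g, ‖∑ i ∈ s with g i = y, w i‖ ^ 2
      ≤ ∑ y ∈ s.image g, m * ∑ i ∈ s with g i = y, ‖w i‖ ^ 2 := by
        gcongr with y hy
        calc ‖∑ i ∈ s with g i = y, w i‖ ^ 2 ≤ (∑ i ∈ s with g i = y, ‖w i‖) ^ 2 := by
              gcongr; exact norm_sum_le _ _
          _ ≤ #{i ∈ s | g i = y} * ∑ i ∈ s with g i = y, ‖w i‖ ^ 2 :=
              sq_sum_le_card_mul_sum_sq
          _ ≤ m * ∑ i ∈ s with g i = y, ‖w i‖ ^ 2 := by gcongr; exact hm y hy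
    _ = m * ∑ i ∈ s, ‖w i‖ ^ 2 := by
        rw [← mul_sum, sum_fiberwise_of_maps_to fun i hi => mem_image_of_mem g hi]

theorem sum_mul_comp_eq_sum_image_mul {ι κ R : Type*} [DecidableEq κ]
    [NonUnitalNonAssocSemiring R] (s : Finset ι) (g : ι → κ) (w : ι → R) (h : κ → R) :
    ∑ i ∈ s, w i * h (g i) = ∑ y ∈ s.image g, (∑ i ∈ s with g i = y, w i) * h y := by
  rw [← sum_fiberwise_of_maps_to fun i hi => mem_image_of_mem g hi]
  refine sum_congr rfl fun y _ => ?_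
  rw [sum_mul]
  exact sum_congr rfl fun i hi => by rw [(mem_filter.1 hi).2]

theorem sum_mul_map_pow {ι M R F : Type*} [CommMonoid M] [CommSemiring R] [FunLike F M R]
    [MonoidHomClass F M R] (χ : F) (s : Finset ι) (c : ι → R) (x : ι → M) (k : ℕ) :
    (∑ i ∈ s, c i * χ (x i)) ^ k =
      ∑ f ∈ Fintype.piFinset fun _ : Fin k => s, (∏ j, c (f j)) * χ (∏ j, x (f j)) := by
  rw [sum_pow']
  exact sum_congr rfl fun f _ => by rw [prod_mul_distrib, map_prod]

namespace DirichletCharacter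

variable {q : ℕ} [NeZero q]

theorem sum_apply_mul_conj_apply_eq_zero {u v : ZMod q} (huv : u ≠ v) :
    ∑ χ : DirichletCharacter ℂ q, χ u * conj (χ v) = 0 := by
  have hne : u * Ring.inverse v ≠ 1 := by
    intro h
    by_cases hv : IsUnit v
    · exact huv (by rw [← Ring.inverse_mul_cancel_right v u hv, h, one_mul])
    · rw [Ring.inverse_non_unit v hv, mul_zero] at h
      exact huv ((subsingleton_of_zero_eq_one h).elim u v)
  simp only [starRingEnd_apply, MulChar.star_apply', MulChar.inv_apply, ← map_mul]
  exact sum_characters_eq_zero ℂ hne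

theorem sum_norm_apply_sq_le_totient (u : ZMod q) :
    ∑ χ : DirichletCharacter ℂ q, ‖χ u‖ ^ 2 ≤ φ q := by
  calc ∑ χ : DirichletCharacter ℂ q, ‖χ u‖ ^ 2 ≤ ∑ _χ : DirichletCharacter ℂ q, 1 :=
        sum_le_sum fun χ _ => pow_le_one₀ (norm_nonneg _) (χ.norm_le_one u)
    _ = φ q := by
        rw [sum_const, card_univ, ← Nat.card_eq_fintype_card,
          card_eq_totient_of_hasEnoughRootsOfUnity, nsmul_one]

theorem sum_norm_sq_sum_mul_apply_le (s : Finset (ZMod q)) (b : ZMod q → ℂ) :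
    ∑ χ : DirichletCharacter ℂ q, ‖∑ u ∈ s, b u * χ u‖ ^ 2 ≤ φ q * ∑ u ∈ s, ‖b u‖ ^ 2 := by
  have hdiag : ∑ χ : DirichletCharacter ℂ q,
        (∑ u ∈ s, b u * χ u) * conj (∑ v ∈ s, b v * χ v) =
      ∑ u ∈ s, b u * conj (b u) * ∑ χ : DirichletCharacter ℂ q, χ u * conj (χ u) :=
    calc _ = ∑ u ∈ s, ∑ v ∈ s, b u * conj (b v) *
            ∑ χ : DirichletCharacter ℂ q, χ u * conj (χ v) := by
          simp only [map_sum, sum_mul_sum]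
          rw [sum_comm]
          refine sum_congr rfl fun u _ => ?_
          rw [sum_comm]
          refine sum_congr rfl fun v _ => ?_
          rw [mul_sum]
          refine sum_congr rfl fun χ _ => ?_
          simp only [map_mul]
          ring
      _ = _ := sum_congr rfl fun u hu => sum_eq_single_of_mem u hu fun v _ hvu => by
          rw [sum_apply_mul_conj_apply_eq_zero hvu.symm, mul_zero]
  have hdiag_norm : ((∑ χ : DirichletCharacter ℂ q, ‖∑ u ∈ s, b u * χ u‖ ^ 2 : ℝ) : ℂ) =
      ((∑ u ∈ s, ‖b u‖ ^ 2 * ∑ χ : DirichletCharacter ℂ q, ‖χ u‖ ^ 2 : ℝ) : ℂ) := by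
    push_cast
    simpa only [← Complex.mul_conj'] using hdiag
  calc ∑ χ : DirichletCharacter ℂ q, ‖∑ u ∈ s, b u * χ u‖ ^ 2
      = ∑ u ∈ s, ‖b u‖ ^ 2 * ∑ χ : DirichletCharacter ℂ q, ‖χ u‖ ^ 2 := by
        exact_mod_cast hdiag_norm
    _ ≤ ∑ u ∈ s, ‖b u‖ ^ 2 * φ q := by
        gcongr with u; exact sum_norm_apply_sq_le_totient u
    _ = φ q * ∑ u ∈ s, ‖b u‖ ^ 2 := by rw [← sum_mul, mul_comm]

theorem sum_norm_sum_mul_apply_pow_le_of_prime (k N : ℕ) (P : Finset ℕ)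
    (hP : ∀ p ∈ P, p.Prime ∧ p ≤ N) (hNq : N ^ k < q) (c : ℕ → ℂ) :
    ∑ χ : DirichletCharacter ℂ q, ‖∑ p ∈ P, c p * χ p‖ ^ (2 * k) ≤
      φ q * k ! * (∑ p ∈ P, ‖c p‖ ^ 2) ^ k := by
  set T := Fintype.piFinset fun _ : Fin k => P
  have hT : ∀ f ∈ T, ∀ i, (f i).Prime ∧ f i ≤ N := fun f hf i =>
    hP _ (Fintype.mem_piFinset.1 hf i)
  set res : (Fin k → ℕ) → ZMod q := fun f => ((∏ i, f i : ℕ) : ZMod q)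
  set w : (Fin k → ℕ) → ℂ := fun f => ∏ j, c (f j)
  have hpow : ∀ χ : DirichletCharacter ℂ q, (∑ p ∈ P, c p * χ p) ^ k =
      ∑ u ∈ T.image res, (∑ f ∈ T with res f = u, w f) * χ u := fun χ => by
    rw [sum_mul_map_pow, ← sum_mul_comp_eq_sum_image_mul]
    simp only [res, Nat.cast_prod]
    rfl
  have hfiber : ∀ u ∈ T.image res, #{f ∈ T | res f = u} ≤ k ! := by
    intro u hu
    obtain ⟨f₀, hf₀, rfl⟩ := mem_image.1 hu
    exact card_filter_natCast_prod_eq_le_factorial T hT hNq hf₀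
  calc ∑ χ : DirichletCharacter ℂ q, ‖∑ p ∈ P, c p * χ p‖ ^ (2 * k)
      = ∑ χ : DirichletCharacter ℂ q,
          ‖∑ u ∈ T.image res, (∑ f ∈ T with res f = u, w f) * χ u‖ ^ 2 := by
        simp only [pow_mul', ← norm_pow, hpow]
    _ ≤ φ q * ∑ u ∈ T.image res, ‖∑ f ∈ T with res f = u, w f‖ ^ 2 :=
        sum_norm_sq_sum_mul_apply_le _ _
    _ ≤ φ q * (k ! * ∑ f ∈ T, ‖w f‖ ^ 2) := by
        gcongr; exact sum_norm_sq_sum_fiberwise_le T res w hfiber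
    _ = φ q * k ! * (∑ p ∈ P, ‖c p‖ ^ 2) ^ k := by
        simp only [sum_pow', w, norm_prod, prod_pow, T]
        ring

end DirichletCharacter

/-- There is an absolute constant `C` such that for any modulus `q`, any `y > 0` and `k ≥ 1`
with `y^k ≤ φ(q)/log q`, and any coefficients `a(p)`, the `2k`-th moment over all Dirichlet
characters mod `q` of the prime Dirichlet polynomial `∑_{p ≤ y} a(p)χ(p)/√p` is at most
`C · φ(q) · k! · (∑_{p ≤ y} |a(p)|²/p)^k`. -/
theorem char_sum_prime_poly_moment_bound :
    ∃ C : ℝ, 0 < C ∧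
      ∀ (q : ℕ) (_ : NeZero q) (y : ℝ) (_ : 0 < y) (k : ℕ) (_ : 1 ≤ k) (a : ℕ → ℂ),
        y ^ k ≤ (Nat.totient q : ℝ) / Real.log q →
        (∑ᶠ χ : DirichletCharacter ℂ q,
            ‖∑ p ∈ (Finset.range (Nat.floor y + 1)).filter Nat.Prime,
                a p * χ (p : ZMod q) / (Real.sqrt p : ℂ)‖ ^ (2 * k))
          ≤ C * (Nat.totient q : ℝ) * (Nat.factorial k : ℝ)
              * (∑ p ∈ (Finset.range (Nat.floor y + 1)).filter Nat.Prime,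
                  ‖a p‖ ^ 2 / (p : ℝ)) ^ k := by
  refine ⟨1, one_pos, fun q _ y hy k _ a hyk => ?_⟩
  have hNq : ⌊y⌋₊ ^ k < q := by
    have : (⌊y⌋₊ : ℝ) ^ k < q :=
      (pow_le_pow_left₀ (Nat.cast_nonneg _) (Nat.floor_le hy.le) k).trans_lt
        (hyk.trans_lt (Nat.totient_div_log_lt_self (NeZero.ne q)))
    exact_mod_cast this
  have hP : ∀ p ∈ (range (⌊y⌋₊ + 1)).filter Nat.Prime, p.Prime ∧ p ≤ ⌊y⌋₊ := fun p hp => by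
    rw [mem_filter, mem_range] at hp
    exact ⟨hp.2, Nat.lt_succ_iff.1 hp.1⟩
  have hc : ∀ p : ℕ, ‖a p / (Real.sqrt p : ℂ)‖ ^ 2 = ‖a p‖ ^ 2 / p := fun p => by
    rw [norm_div, Complex.norm_real, Real.norm_of_nonneg (Real.sqrt_nonneg _), div_pow,
      Real.sq_sqrt (Nat.cast_nonneg _)]
  simp only [finsum_eq_sum_of_fintype, one_mul, mul_div_right_comm (a _), ← hc]
  exact DirichletCharacter.sum_norm_sum_mul_apply_pow_le_of_prime k _ _ hP hNq _
end

section
/- Let a_{k,y}(n) = ∑_{p₁⋯p_k = n, each p_i ≤ y prime} a(p₁)⋯a(p_k) be the coefficient of the k-th power of a prime Dirichlet polynomial. Then ∑_{n ≤ y^k} |a_{k,y}(n)|²/n ≤ k!·(∑_{p ≤ y} |a(p)|²/p)^k. -/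
/-!
Expanding the `k`-th power, the coefficient of `n` is a sum over the tuples of primes
`(p₁, …, p_k)` with product `n`. By unique factorisation these tuples are rearrangements of the
prime factorisation of `n`, so there are at most `k!` of them, and Cauchy–Schwarz gives
`|a_{k,y}(n)|² / n ≤ k! ∑ ∏ |a(pᵢ)|² / pᵢ` over them. Summing over `n` counts every tuple of primes
`≤ y` at most once, and the sum over all such tuples factors as `(∑_{p ≤ y} |a(p)|² / p)^k`.
-/

open Finset

open scoped Nat

variable {k : ℕ}

theorem Nat.ofFn_perm_primeFactorsList_prod {f : Fin k → ℕ} (hf : ∀ i, (f i).Prime) :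
    (List.ofFn f).Perm (∏ i, f i).primeFactorsList :=
  Nat.primeFactorsList_unique List.prod_ofFn fun _ hp ↦ by
    obtain ⟨i, rfl⟩ := List.mem_ofFn.mp hp
    exact hf i

/-- `f ↦ List.ofFn f` embeds such a family into the permutations of the prime factorisation
of `n`, which has length `k`. -/
theorem card_le_factorial_of_prime_tuples_prod_eq {n : ℕ} {s : Finset (Fin k → ℕ)}
    (hs : ∀ f ∈ s, (∀ i, (f i).Prime) ∧ ∏ i, f i = n) : #s ≤ k ! := by
  obtain rfl | ⟨f₀, hf₀⟩ := s.eq_empty_or_nonempty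
  · simp
  have hperm : ∀ f ∈ s, (List.ofFn f).Perm n.primeFactorsList := fun f hf ↦
    (hs f hf).2 ▸ Nat.ofFn_perm_primeFactorsList_prod (hs f hf).1
  have hlen : n.primeFactorsList.length = k := by
    simpa using (hperm f₀ hf₀).length_eq.symm
  calc #s ≤ #n.primeFactorsList.permutations.toFinset :=
        card_le_card_of_injOn List.ofFn
          (fun f hf ↦ List.mem_toFinset.mpr (List.mem_permutations.mpr (hperm f hf)))
          List.ofFn_injective.injOn
    _ ≤ n.primeFactorsList.permutations.length := List.toFinset_card_le _
    _ = k ! := by rw [List.length_permutations, hlen]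

theorem norm_sum_sq_le_card_mul_sum_norm_sq {ι E : Type*} [SeminormedAddCommGroup E]
    (s : Finset ι) (g : ι → E) :
    ‖∑ i ∈ s, g i‖ ^ 2 ≤ #s * ∑ i ∈ s, ‖g i‖ ^ 2 :=
  (pow_le_pow_left₀ (norm_nonneg _) (norm_sum_le s g) 2).trans sq_sum_le_card_mul_sum_sq

section

variable {ι 𝕜 : Type*} [NormedField 𝕜]

theorem norm_prod_sq_div_prod [Fintype ι] (a : ℕ → 𝕜) (f : ι → ℕ) :
    ‖∏ i, a (f i)‖ ^ 2 / (∏ i, f i : ℕ) = ∏ i, ‖a (f i)‖ ^ 2 / (f i : ℝ) := by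
  rw [norm_prod, ← prod_pow, Nat.cast_prod, prod_div_distrib]

theorem norm_sum_prime_tuples_sq_div_le {n : ℕ} {s : Finset (Fin k → ℕ)}
    (hs : ∀ f ∈ s, (∀ i, (f i).Prime) ∧ ∏ i, f i = n) (a : ℕ → 𝕜) :
    ‖∑ f ∈ s, ∏ i, a (f i)‖ ^ 2 / n ≤ k ! * ∑ f ∈ s, ∏ i, ‖a (f i)‖ ^ 2 / (f i : ℝ) := by
  have hcard : (#s : ℝ) ≤ k ! := by exact_mod_cast card_le_factorial_of_prime_tuples_prod_eq hs
  calc ‖∑ f ∈ s, ∏ i, a (f i)‖ ^ 2 / n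
      ≤ k ! * ∑ f ∈ s, ‖∏ i, a (f i)‖ ^ 2 / n := by
        rw [← sum_div, mul_div_assoc']
        gcongr
        exact (norm_sum_sq_le_card_mul_sum_norm_sq s _).trans (by gcongr)
    _ = k ! * ∑ f ∈ s, ∏ i, ‖a (f i)‖ ^ 2 / (f i : ℝ) := by
        congr 1
        refine sum_congr rfl fun f hf ↦ ?_
        rw [← (hs f hf).2, norm_prod_sq_div_prod]

theorem sum_norm_sq_div_le_factorial_mul (P : Finset ℕ) (hP : ∀ p ∈ P, p.Prime)
    (N : Finset ℕ) (a : ℕ → 𝕜) :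
    ∑ n ∈ N, ‖∑ f ∈ {f ∈ Fintype.piFinset fun _ : Fin k ↦ P | ∏ i, f i = n},
        ∏ i, a (f i)‖ ^ 2 / (n : ℝ)
      ≤ k ! * (∑ p ∈ P, ‖a p‖ ^ 2 / (p : ℝ)) ^ k := by
  set T := Fintype.piFinset fun _ : Fin k ↦ P with hT
  have hprime : ∀ n, ∀ f ∈ {f ∈ T | ∏ i, f i = n}, (∀ i, (f i).Prime) ∧ ∏ i, f i = n :=
    fun n f hf ↦ by
      rw [mem_filter, hT, Fintype.mem_piFinset] at hf
      exact ⟨fun i ↦ hP _ (hf.1 i), hf.2⟩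
  calc _ ≤ ∑ n ∈ N, k ! * ∑ f ∈ {f ∈ T | ∏ i, f i = n}, ∏ i, ‖a (f i)‖ ^ 2 / (f i : ℝ) :=
        sum_le_sum fun n _ ↦ norm_sum_prime_tuples_sq_div_le (hprime n) a
    _ = k ! * ∑ f ∈ {f ∈ T | ∏ i, f i ∈ N}, ∏ i, ‖a (f i)‖ ^ 2 / (f i : ℝ) := by
        rw [← mul_sum, sum_fiberwise_eq_sum_filter]
    _ ≤ k ! * ∑ f ∈ T, ∏ i, ‖a (f i)‖ ^ 2 / (f i : ℝ) := by
        gcongr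
        exact filter_subset _ _
    _ = k ! * (∑ p ∈ P, ‖a p‖ ^ 2 / (p : ℝ)) ^ k := by
        rw [hT, ← prod_univ_sum (fun _ ↦ P) fun _ p ↦ ‖a p‖ ^ 2 / (p : ℝ), prod_const,
          card_univ, Fintype.card_fin]

end

theorem diagonal_coeff_sum_le_general (y : ℝ) (k : ℕ) (a : ℕ → ℂ) :
    (∑ n ∈ Finset.Icc 1 (Nat.floor y ^ k),
        ‖∑ f ∈ (Fintype.piFinset fun _ : Fin k =>
              (Finset.range (Nat.floor y + 1)).filter Nat.Prime).filter
            (fun f => ∏ i, f i = n),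
          ∏ i, a (f i)‖ ^ 2 / (n : ℝ))
      ≤ (Nat.factorial k : ℝ)
          * (∑ p ∈ (Finset.range (Nat.floor y + 1)).filter Nat.Prime,
              ‖a p‖ ^ 2 / (p : ℝ)) ^ k :=
  sum_norm_sq_div_le_factorial_mul _ (fun _ hp ↦ (mem_filter.mp hp).2) _ a

/-- Let `a_{k,y}(n) = ∑_{p₁⋯p_k = n, p_i ≤ y prime} a(p₁)⋯a(p_k)`.
Then `∑_{n ≤ y^k} |a_{k,y}(n)|²/n ≤ k! (∑_{p ≤ y} |a(p)|²/p)^k`. -/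
theorem diagonal_coeff_sum_le (y : ℝ) (hy : 0 < y) (k : ℕ) (hk : 1 ≤ k) (a : ℕ → ℂ) :
    (∑ n ∈ Finset.Icc 1 (Nat.floor y ^ k),
        ‖∑ f ∈ (Fintype.piFinset fun _ : Fin k =>
              (Finset.range (Nat.floor y + 1)).filter Nat.Prime).filter
            (fun f => ∏ i, f i = n),
          ∏ i, a (f i)‖ ^ 2 / (n : ℝ))
      ≤ (Nat.factorial k : ℝ)
          * (∑ p ∈ (Finset.range (Nat.floor y + 1)).filter Nat.Prime,
              ‖a p‖ ^ 2 / (p : ℝ)) ^ k :=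
  diagonal_coeff_sum_le_general y k a
end

section
/- The sum over pairs of positive integers m < n ≤ Q² of τ₄(m)τ(m)τ₄(n)τ(n)/(√(mn)·(n − m)) is O((log Q)^{65}) as Q → ∞. -/
open Finset Filter

/-!
Write `a m = τ₄(m) τ(m)`. By AM–GM, `a m * a n / √(m n) ≤ (a m ^ 2 / m + a n ^ 2 / n) / 2`, and for
fixed `m` (or fixed `n`) the weights `1 / (n - m)` add up to at most the harmonic number `H_N`, so
the sum is at most `H_N * ∑_{m ≤ N} a m ^ 2 / m`.

Two factorizations of `m` into `j` and `k` factors can be merged into a `k × j` matrix of factors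
with the given row and column products, so `τ_j τ_k ≤ τ_{jk}`. Hence `a m ^ 2 ≤ τ₆₄(m)`, and
`∑_{m ≤ N} τ₆₄(m) / m ≤ H_N ^ 64` by expanding `H_N ^ 64`. Finally `H_N ≤ 1 + 2 log Q` for
`N = ⌊Q²⌋`.
-/

theorem Finset.exists_mul_eq_and_prod_eq_of_dvd_prod {ι α : Type*} [CommMonoid α]
    [DecompositionMonoid α] [Subsingleton αˣ] [DecidableEq ι] {c : α} (t : Finset ι)
    (d : ι → α) (h : c ∣ ∏ i ∈ t, d i) :
    ∃ s q : ι → α, (∀ i, s i * q i = d i) ∧ ∏ i ∈ t, s i = c := by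
  induction t using Finset.induction_on generalizing c with
  | empty =>
    rw [prod_empty] at h
    exact ⟨1, d, fun i => one_mul _, (isUnit_of_dvd_one h).eq_one.symm⟩
  | insert a t hat ih =>
    rw [prod_insert hat] at h
    obtain ⟨c₁, c₂, hc₁, hc₂, rfl⟩ := exists_dvd_and_dvd_of_dvd_mul h
    obtain ⟨s, q, hsq, hs⟩ := ih hc₂
    obtain ⟨r, hr⟩ := hc₁
    refine ⟨Function.update s a c₁, Function.update q a r, fun i => ?_, ?_⟩
    · rcases eq_or_ne i a with rfl | hia
      · simp [hr]
      · simp [hia, hsq]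
    · rw [prod_insert hat, Function.update_self, prod_update_of_notMem hat, hs]

theorem Nat.exists_matrix_prod_rows_cols {ι : Type*} [Fintype ι] [DecidableEq ι] :
    ∀ {k : ℕ} (e : Fin k → ℕ) (d : ι → ℕ), ∏ l, d l = ∏ i, e i → ∏ i, e i ≠ 0 →
      ∃ M : Fin k → ι → ℕ, (∀ i, ∏ l, M i l = e i) ∧ ∀ l, ∏ i, M i l = d l
  | 0, e, d, hde, _ => by
    refine ⟨finZeroElim, finZeroElim, fun l => ?_⟩
    rw [Fin.prod_univ_zero] at hde ⊢
    exact (Nat.dvd_one.mp (hde ▸ dvd_prod_of_mem d (mem_univ l))).symm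
  | k + 1, e, d, hde, he => by
    rw [Fin.prod_univ_succ] at hde he
    obtain ⟨s, q, hsq, hs⟩ :=
      univ.exists_mul_eq_and_prod_eq_of_dvd_prod d (hde ▸ dvd_mul_right _ _)
    have hq : ∏ l, q l = ∏ i : Fin k, e i.succ := by
      refine mul_left_cancel₀ (left_ne_zero_of_mul he) ?_
      rw [← hde, ← hs, ← prod_mul_distrib]
      exact prod_congr rfl fun l _ => hsq l
    obtain ⟨M, hrow, hcol⟩ :=
      exists_matrix_prod_rows_cols (fun i => e i.succ) q hq (right_ne_zero_of_mul he)
    refine ⟨Fin.cons s M, Fin.cases hs hrow, fun l => ?_⟩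
    rw [Fin.prod_univ_succ]
    simp only [Fin.cons_zero, Fin.cons_succ, hcol, hsq]

theorem Nat.card_finMulAntidiag_mul_card_le (j k n : ℕ) :
    #(finMulAntidiag j n) * #(finMulAntidiag k n) ≤ #(finMulAntidiag (j * k) n) := by
  rw [← card_product]
  let rows (f : Fin (j * k) → ℕ) (i : Fin k) : ℕ := ∏ l, f (finProdFinEquiv (l, i))
  let cols (f : Fin (j * k) → ℕ) (l : Fin j) : ℕ := ∏ i, f (finProdFinEquiv (l, i))
  refine card_le_card_of_surjOn (fun f => (cols f, rows f)) ?_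
  rintro ⟨d, e⟩ hde
  simp only [coe_product, Set.mem_prod, mem_coe, mem_finMulAntidiag] at hde
  obtain ⟨⟨hd, hn⟩, he, -⟩ := hde
  obtain ⟨M, hrow, hcol⟩ := exists_matrix_prod_rows_cols e d (hd.trans he.symm) (he ▸ hn)
  refine ⟨fun x => M (finProdFinEquiv.symm x).2 (finProdFinEquiv.symm x).1, ?_, ?_⟩
  · simpa only [mem_coe, mem_finMulAntidiag, ← finProdFinEquiv.prod_comp, Equiv.symm_apply_apply,
      Fintype.prod_prod_type, hcol, hd, true_and] using hn
  · simp only [rows, cols, Equiv.symm_apply_apply, hrow, hcol]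

theorem tau4_eq_card_finMulAntidiag (n : ℕ) : tau4 n = #(Nat.finMulAntidiag 4 n) := by
  refine card_nbij' (fun t => ![t.1.1, t.1.2, t.2.1, t.2.2]) (fun f => ((f 0, f 1), (f 2, f 3)))
    ?_ ?_ ?_ ?_
  · rintro ⟨⟨a, b⟩, c, d⟩ h
    simp only [coe_filter, mem_product, mem_Icc, Set.mem_ofPred_eq] at h
    obtain ⟨⟨⟨⟨ha, -⟩, hb, -⟩, ⟨hc, -⟩, hd, -⟩, rfl⟩ := h
    simp only [mem_coe, Nat.mem_finMulAntidiag, Fin.prod_univ_four]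
    exact ⟨rfl, by positivity⟩
  · intro f hf
    have hn := (Nat.mem_finMulAntidiag.mp hf).2
    have hmem (i : Fin 4) : f i ∈ Icc 1 n :=
      mem_Icc.mpr ⟨Nat.one_le_iff_ne_zero.mpr (Nat.ne_zero_of_mem_finMulAntidiag hf i),
        Nat.le_of_dvd (Nat.pos_of_ne_zero hn) (Nat.dvd_of_mem_finMulAntidiag hf i)⟩
    simp only [coe_filter, mem_product, hmem, and_self, true_and, Set.mem_ofPred_eq]
    rw [← Nat.prod_eq_of_mem_finMulAntidiag hf, Fin.prod_univ_four]
  · rintro ⟨⟨a, b⟩, c, d⟩ -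
    rfl
  · intro f _
    ext i
    fin_cases i <;> rfl

theorem card_divisors_eq_card_finMulAntidiag (n : ℕ) :
    #n.divisors = #(Nat.finMulAntidiag 2 n) := by
  rw [← card_image_of_injective (Nat.finMulAntidiag 2 n) (piFinTwoEquiv _).injective,
    Nat.image_piFinTwoEquiv_finMulAntidiag, ← Nat.map_div_right_divisors, card_map]

theorem harmonic_nonneg (n : ℕ) : 0 ≤ harmonic n := by
  rw [harmonic_eq_sum_Icc]
  positivity

theorem harmonic_eq_sum_Icc_real (N : ℕ) : (harmonic N : ℝ) = ∑ a ∈ Icc 1 N, (a : ℝ)⁻¹ := by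
  simp [harmonic_eq_sum_Icc]

theorem Nat.finMulAntidiag_eq_filter_piFinset_Icc {r N m : ℕ} (hm : m ∈ Icc 1 N) :
    finMulAntidiag r m = {f ∈ Fintype.piFinset fun _ : Fin r => Icc 1 N | ∏ i, f i = m} := by
  rw [mem_Icc] at hm
  ext f
  simp only [mem_finMulAntidiag, mem_filter, Fintype.mem_piFinset, mem_Icc]
  constructor
  · rintro ⟨rfl, hm0⟩
    refine ⟨fun i => ⟨?_, ?_⟩, rfl⟩
    · exact Nat.one_le_iff_ne_zero.mpr fun h => hm0 (prod_eq_zero (mem_univ i) h)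
    · exact (Nat.le_of_dvd (by omega) (dvd_prod_of_mem f (mem_univ i))).trans hm.2
  · rintro ⟨-, rfl⟩
    exact ⟨rfl, by omega⟩

theorem Nat.sum_card_finMulAntidiag_div_le (r N : ℕ) :
    ∑ m ∈ Icc 1 N, (#(finMulAntidiag r m) : ℝ) / m ≤ (harmonic N : ℝ) ^ r := by
  set S := Fintype.piFinset fun _ : Fin r => Icc 1 N
  have hfiber (m : ℕ) (hm : m ∈ Icc 1 N) :
      (#(finMulAntidiag r m) : ℝ) / m = ∑ f ∈ S with ∏ i, f i = m, ∏ i, (f i : ℝ)⁻¹ := by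
    rw [finMulAntidiag_eq_filter_piFinset_Icc hm, div_eq_mul_inv, ← nsmul_eq_mul, ← sum_const]
    refine sum_congr rfl fun f hf => ?_
    rw [← (mem_filter.mp hf).2, Nat.cast_prod, prod_inv_distrib]
  calc ∑ m ∈ Icc 1 N, (#(finMulAntidiag r m) : ℝ) / m
      = ∑ f ∈ S with ∏ i, f i ∈ Icc 1 N, ∏ i, (f i : ℝ)⁻¹ := by
        rw [sum_congr rfl hfiber, sum_fiberwise_eq_sum_filter]
    _ ≤ ∑ f ∈ S, ∏ i, (f i : ℝ)⁻¹ :=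
        sum_le_sum_of_subset_of_nonneg (filter_subset _ _) fun _ _ _ => by positivity
    _ = (harmonic N : ℝ) ^ r := by rw [harmonic_eq_sum_Icc_real, sum_pow']

theorem sum_inv_le_harmonic_of_injOn {ι : Type*} {s : Finset ι} {g : ι → ℕ} {N : ℕ}
    (hg : Set.InjOn g s) (hgs : ∀ i ∈ s, g i ∈ Icc 1 N) :
    ∑ i ∈ s, (g i : ℝ)⁻¹ ≤ harmonic N := by
  classical
  rw [← sum_image (f := fun k : ℕ => (k : ℝ)⁻¹) hg, harmonic_eq_sum_Icc_real]
  exact sum_le_sum_of_subset_of_nonneg (image_subset_iff.mpr hgs) fun _ _ _ => by positivity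

theorem sum_inv_sub_left_le_harmonic (m N : ℕ) :
    ∑ n ∈ Icc 1 N with m < n, ((n : ℝ) - m)⁻¹ ≤ harmonic N :=
  calc ∑ n ∈ Icc 1 N with m < n, ((n : ℝ) - m)⁻¹
      = ∑ n ∈ Icc 1 N with m < n, ((n - m : ℕ) : ℝ)⁻¹ :=
        sum_congr rfl fun n hn => by rw [Nat.cast_sub (mem_filter.mp hn).2.le]
    _ ≤ harmonic N := by
        refine sum_inv_le_harmonic_of_injOn (fun n hn n' hn' h => ?_) fun n hn => ?_ <;>
          simp only [coe_filter, Set.mem_ofPred_eq, mem_filter, mem_Icc] at * <;> omega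

theorem sum_inv_sub_right_le_harmonic {n N : ℕ} (hn : n ≤ N) :
    ∑ m ∈ Icc 1 N with m < n, ((n : ℝ) - m)⁻¹ ≤ harmonic N :=
  calc ∑ m ∈ Icc 1 N with m < n, ((n : ℝ) - m)⁻¹
      = ∑ m ∈ Icc 1 N with m < n, ((n - m : ℕ) : ℝ)⁻¹ :=
        sum_congr rfl fun m hm => by rw [Nat.cast_sub (mem_filter.mp hm).2.le]
    _ ≤ harmonic N := by
        refine sum_inv_le_harmonic_of_injOn (fun m hm m' hm' h => ?_) fun m hm => ?_ <;>
          simp only [coe_filter, Set.mem_ofPred_eq, mem_filter, mem_Icc] at * <;> omega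

theorem mul_div_sqrt_mul_le {x y : ℝ} (hx : 0 ≤ x) (hy : 0 ≤ y) (a c : ℝ) :
    a * c / √(x * y) ≤ (a ^ 2 / x + c ^ 2 / y) / 2 := by
  have hu : a ^ 2 / x = (a / √x) ^ 2 := by rw [div_pow, Real.sq_sqrt hx]
  have hv : c ^ 2 / y = (c / √y) ^ 2 := by rw [div_pow, Real.sq_sqrt hy]
  rw [Real.sqrt_mul hx, mul_div_mul_comm, hu, hv]
  linarith [two_mul_le_add_sq (a / √x) (c / √y)]

theorem sum_offdiag_le_harmonic_mul (a : ℕ → ℝ) (N : ℕ) :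
    ∑ m ∈ Icc 1 N, ∑ n ∈ Icc 1 N,
        (if m < n then a m * a n / (√(m * n) * ((n : ℝ) - m)) else 0)
      ≤ harmonic N * ∑ m ∈ Icc 1 N, a m ^ 2 / m := by
  set b : ℕ → ℝ := fun m => a m ^ 2 / m
  have hb (m : ℕ) : 0 ≤ b m / 2 := by positivity
  have hterm (m n : ℕ) : (if m < n then a m * a n / (√(m * n) * ((n : ℝ) - m)) else 0)
      ≤ (if m < n then b m / 2 * ((n : ℝ) - m)⁻¹ else 0)
        + (if m < n then b n / 2 * ((n : ℝ) - m)⁻¹ else 0) := by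
    split_ifs with hmn
    · have hsub : 0 ≤ ((n : ℝ) - m)⁻¹ := inv_nonneg.mpr (sub_nonneg.mpr (by exact_mod_cast hmn.le))
      calc a m * a n / (√(m * n) * ((n : ℝ) - m))
          = a m * a n / √(m * n) * ((n : ℝ) - m)⁻¹ := by rw [div_mul_eq_div_div, div_eq_mul_inv]
        _ ≤ (b m + b n) / 2 * ((n : ℝ) - m)⁻¹ :=
            mul_le_mul_of_nonneg_right (mul_div_sqrt_mul_le m.cast_nonneg n.cast_nonneg _ _) hsub
        _ = _ := by ring
    · simp
  calc _ ≤ ∑ m ∈ Icc 1 N, ∑ n ∈ Icc 1 N,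
          ((if m < n then b m / 2 * ((n : ℝ) - m)⁻¹ else 0)
            + (if m < n then b n / 2 * ((n : ℝ) - m)⁻¹ else 0)) :=
        sum_le_sum fun m _ => sum_le_sum fun n _ => hterm m n
    _ = ∑ m ∈ Icc 1 N, b m / 2 * ∑ n ∈ Icc 1 N with m < n, ((n : ℝ) - m)⁻¹
          + ∑ n ∈ Icc 1 N, b n / 2 * ∑ m ∈ Icc 1 N with m < n, ((n : ℝ) - m)⁻¹ := by
        simp only [sum_add_distrib]
        congr 1
        · simp only [mul_sum, sum_filter, mul_ite, mul_zero]
        · rw [sum_comm]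
          simp only [mul_sum, sum_filter, mul_ite, mul_zero]
    _ ≤ ∑ m ∈ Icc 1 N, b m / 2 * harmonic N + ∑ n ∈ Icc 1 N, b n / 2 * harmonic N := by
        gcongr with m _ n hn
        · exact sum_inv_sub_left_le_harmonic m N
        · exact sum_inv_sub_right_le_harmonic (mem_Icc.mp hn).2
    _ = harmonic N * ∑ m ∈ Icc 1 N, b m := by simp only [← sum_mul, ← sum_div]; ring

theorem sum_offdiag_nonneg {a : ℕ → ℝ} (ha : ∀ m, 0 ≤ a m) (N : ℕ) :
    0 ≤ ∑ m ∈ Icc 1 N, ∑ n ∈ Icc 1 N,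
        (if m < n then a m * a n / (√(m * n) * ((n : ℝ) - m)) else 0) := by
  refine sum_nonneg fun m _ => sum_nonneg fun n _ => ?_
  split_ifs with hmn
  · have : 0 ≤ (n : ℝ) - m := sub_nonneg.mpr (by exact_mod_cast hmn.le)
    have := ha m
    have := ha n
    positivity
  · exact le_rfl

theorem sq_tau4_mul_card_divisors_le (n : ℕ) :
    (tau4 n * #n.divisors) ^ 2 ≤ #(Nat.finMulAntidiag 64 n) := by
  have h8 : tau4 n * #n.divisors ≤ #(Nat.finMulAntidiag 8 n) := by
    rw [tau4_eq_card_finMulAntidiag, card_divisors_eq_card_finMulAntidiag]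
    exact Nat.card_finMulAntidiag_mul_card_le 4 2 n
  rw [sq]
  exact (Nat.mul_le_mul h8 h8).trans (Nat.card_finMulAntidiag_mul_card_le 8 8 n)

theorem sum_sq_tau4_mul_card_divisors_div_le (N : ℕ) :
    ∑ m ∈ Icc 1 N, ((tau4 m : ℝ) * #m.divisors) ^ 2 / m ≤ (harmonic N : ℝ) ^ 64 := by
  refine le_trans (sum_le_sum fun m _ => ?_) (Nat.sum_card_finMulAntidiag_div_le 64 N)
  gcongr
  exact_mod_cast sq_tau4_mul_card_divisors_le m

theorem harmonic_floor_sq_le {Q : ℝ} (hQ : 1 ≤ Q) :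
    (harmonic ⌊Q ^ 2⌋₊ : ℝ) ≤ 1 + 2 * Real.log Q := by
  have hN : (0 : ℝ) < ⌊Q ^ 2⌋₊ := by
    exact_mod_cast Nat.floor_pos.mpr (one_le_pow₀ hQ)
  calc (harmonic ⌊Q ^ 2⌋₊ : ℝ) ≤ 1 + Real.log ⌊Q ^ 2⌋₊ := harmonic_le_one_add_log _
    _ ≤ 1 + Real.log (Q ^ 2) := by gcongr; exact Nat.floor_le (by positivity)
    _ = 1 + 2 * Real.log Q := by rw [Real.log_pow]; norm_num

/-- The sum over `m < n ≤ Q²` of `τ₄(m)τ(m)τ₄(n)τ(n)/(√(mn)(n-m))` is `O((log Q)^65)`. -/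
theorem sum_offdiag_minus_isBigO :
    (fun Q : ℝ =>
        ∑ m ∈ Finset.Icc 1 (Nat.floor (Q ^ 2)), ∑ n ∈ Finset.Icc 1 (Nat.floor (Q ^ 2)),
          if m < n then
            (tau4 m : ℝ) * (m.divisors.card : ℝ) * (tau4 n : ℝ) * (n.divisors.card : ℝ)
              / (Real.sqrt (m * n) * ((n : ℝ) - (m : ℝ)))
          else 0)
      =O[atTop] fun Q : ℝ => Real.log Q ^ 65 := by
  refine Asymptotics.IsBigO.of_bound (3 ^ 65) ?_
  filter_upwards [eventually_ge_atTop (Real.exp 1)] with Q hQ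
  set N := ⌊Q ^ 2⌋₊
  have hlog : 1 ≤ Real.log Q := (Real.le_log_iff_exp_le ((Real.exp_pos 1).trans_le hQ)).mpr hQ
  have hH0 : (0 : ℝ) ≤ harmonic N := by exact_mod_cast harmonic_nonneg N
  have hH : (harmonic N : ℝ) ≤ 3 * Real.log Q := by
    linarith [harmonic_floor_sq_le ((Real.one_le_exp zero_le_one).trans hQ)]
  have hS := sum_offdiag_nonneg (a := fun m => (tau4 m : ℝ) * #m.divisors) (by intro; positivity) N
  have hoffdiag := sum_offdiag_le_harmonic_mul (fun m => (tau4 m : ℝ) * #m.divisors) N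
  simp only [← mul_assoc] at hS hoffdiag
  rw [Real.norm_of_nonneg hS, Real.norm_of_nonneg (by positivity : (0 : ℝ) ≤ Real.log Q ^ 65)]
  calc _ ≤ harmonic N * ∑ m ∈ Icc 1 N, ((tau4 m : ℝ) * #m.divisors) ^ 2 / m := hoffdiag
    _ ≤ harmonic N * harmonic N ^ 64 := by
        gcongr
        exact sum_sq_tau4_mul_card_divisors_div_le N
    _ = harmonic N ^ 65 := by ring
    _ ≤ (3 * Real.log Q) ^ 65 := by gcongr
    _ = 3 ^ 65 * Real.log Q ^ 65 := mul_pow _ _ _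
end
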